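/- arXiv:2307.12248 — 5 statements merged into one kernel-verified Lean document; each statement's English description precedes it below -/
import Mathlib

section
/- Consider a bipartite graph on papers [n] and reviewers [m], where each paper i must receive at least l_i reviews, and each reviewer j is forbidden from reviewing at most K specified papers and may review at most U_j papers. Set L = ∑_i l_i. If for every paper i at least L reviewers do not forbid paper i, and ∑_j U_j ≥ L with U_j ≥ 1 wherever used, then there exists an assignment X ∈ {0,1}^{n×m} with ∑_j X_{i,j} ≥ l_i for every i, ∑_i X_{i,j} ≤ U_j for every j, and X_{i,j} = 0 whenever reviewer j forbids paper i. -/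
open Finset

lemma greedy_aux (n m : ℕ) (forbid : Fin n → Fin m → Bool) :
    ∀ D (d : Fin n → ℕ) (c : Fin m → ℕ) (A : Fin n → Finset (Fin m)),
    D = ∑ i, d i →
    (∀ i, D ≤ (Finset.univ.filter
        (fun j => forbid i j = false ∧ 0 < c j ∧ j ∉ A i)).card) →
    ∃ B : Fin n → Finset (Fin m),
      (∀ i, A i ⊆ B i) ∧
      (∀ i, (A i).card + d i ≤ (B i).card) ∧
      (∀ j, (Finset.univ.filter (fun i => j ∈ B i)).card ≤
            (Finset.univ.filter (fun i => j ∈ A i)).card + c j) ∧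
      (∀ i j, j ∈ B i → j ∈ A i ∨ forbid i j = false) := by
  intro D
  induction D with
  | zero =>
    intro d c A hsum _
    refine ⟨A, fun i => Finset.Subset.refl _, ?_, fun j => Nat.le_add_right _ _,
      fun i j hj => Or.inl hj⟩
    intro i
    have : d i = 0 := by
      have := Finset.sum_eq_zero_iff.mp hsum.symm i (Finset.mem_univ i)
      exact this
    omega
  | succ D ih =>
    intro d c A hsum hcount
    -- find a paper with positive demand
    have hpos : ∃ i0, 0 < d i0 := by
      by_contra h
      push_neg at h
      have : ∑ i, d i = 0 := Finset.sum_eq_zero (fun i _ => Nat.le_zero.mp (h i))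
      omega
    obtain ⟨i0, hi0⟩ := hpos
    -- the available set for i0 is nonempty
    have h1 : 0 < (Finset.univ.filter
        (fun j => forbid i0 j = false ∧ 0 < c j ∧ j ∉ A i0)).card := by
      have := hcount i0; omega
    obtain ⟨j0, hj0⟩ := Finset.card_pos.mp h1
    simp only [Finset.mem_filter, Finset.mem_univ, true_and] at hj0
    obtain ⟨hforb, hcj0, hnotin⟩ := hj0
    set d' : Fin n → ℕ := Function.update d i0 (d i0 - 1) with hd'
    set c' : Fin m → ℕ := Function.update c j0 (c j0 - 1) with hc'
    set A' : Fin n → Finset (Fin m) := Function.update A i0 (insert j0 (A i0)) with hA'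
    have hAmem : ∀ i j, j ≠ j0 → (j ∈ A' i ↔ j ∈ A i) := by
      intro i j hj
      by_cases hi : i = i0
      · subst hi
        simp [hA', Function.update_self, Finset.mem_insert, hj]
      · simp [hA', Function.update_of_ne hi]
    have hsum' : D = ∑ i, d' i := by
      have : ∑ i, d' i = (∑ i, d i) - d i0 + (d i0 - 1) := by
        rw [hd']
        rw [Finset.sum_update_of_mem (Finset.mem_univ i0)]
        have hle : d i0 ≤ ∑ i, d i := Finset.single_le_sum (fun i _ => Nat.zero_le _) (Finset.mem_univ i0)
        have : ∑ j ∈ Finset.univ \ {i0}, d j = (∑ i, d i) - d i0 := by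
          have := Finset.sum_sdiff (Finset.singleton_subset_iff.mpr (Finset.mem_univ i0)) (f := d)
          simp only [Finset.sum_singleton] at this
          omega
        omega
      have hle : d i0 ≤ ∑ i, d i := Finset.single_le_sum (fun i _ => Nat.zero_le _) (Finset.mem_univ i0)
      omega
    have hcount' : ∀ i, D ≤ (Finset.univ.filter
        (fun j => forbid i j = false ∧ 0 < c' j ∧ j ∉ A' i)).card := by
      intro i
      have hsub : (Finset.univ.filter
          (fun j => forbid i j = false ∧ 0 < c j ∧ j ∉ A i)) \ {j0} ⊆
          Finset.univ.filter (fun j => forbid i j = false ∧ 0 < c' j ∧ j ∉ A' i) := by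
        intro j hj
        simp only [Finset.mem_sdiff, Finset.mem_filter, Finset.mem_univ, true_and,
          Finset.mem_singleton] at hj ⊢
        obtain ⟨⟨hf, hc, hA⟩, hne⟩ := hj
        refine ⟨hf, ?_, ?_⟩
        · rw [hc', Function.update_of_ne hne]; exact hc
        · rw [hAmem i j hne]; exact hA
      have hcard := Finset.card_le_card hsub
      have hcard2 : (Finset.univ.filter
          (fun j => forbid i j = false ∧ 0 < c j ∧ j ∉ A i)).card - 1 ≤
          ((Finset.univ.filter
          (fun j => forbid i j = false ∧ 0 < c j ∧ j ∉ A i)) \ {j0}).card := by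
        have h2 := Finset.le_card_sdiff ({j0} : Finset (Fin m)) (Finset.univ.filter
          (fun j => forbid i j = false ∧ 0 < c j ∧ j ∉ A i))
        simpa using h2
      have := hcount i
      omega
    obtain ⟨B, hB1, hB2, hB3, hB4⟩ := ih d' c' A' hsum' hcount'
    refine ⟨B, ?_, ?_, ?_, ?_⟩
    · intro i
      refine Finset.Subset.trans ?_ (hB1 i)
      by_cases hi : i = i0
      · subst hi
        simp only [hA', Function.update_self]
        exact Finset.subset_insert _ _
      · simp [hA', Function.update_of_ne hi]
    · intro i
      have := hB2 i
      by_cases hi : i = i0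
      · subst hi
        have hcard : (A' i).card = (A i).card + 1 := by
          simp only [hA', Function.update_self]
          exact Finset.card_insert_of_notMem hnotin
        have hd : d' i = d i - 1 := by simp only [hd', Function.update_self]
        omega
      · have h1 : A' i = A i := by rw [hA', Function.update_of_ne hi]
        have h2 : d' i = d i := by rw [hd', Function.update_of_ne hi]
        rw [h1, h2] at this
        exact this
    · intro j
      have := hB3 j
      by_cases hj : j = j0
      · subst hj
        have hcard : (Finset.univ.filter (fun i => j ∈ A' i)).card =
            (Finset.univ.filter (fun i => j ∈ A i)).card + 1 := by
          have heq : Finset.univ.filter (fun i => j ∈ A' i) =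
              insert i0 (Finset.univ.filter (fun i => j ∈ A i)) := by
            ext i
            simp only [Finset.mem_filter, Finset.mem_univ, true_and, Finset.mem_insert]
            by_cases hi : i = i0
            · subst hi
              simp [hA', Function.update_self]
            · simp [hA', Function.update_of_ne hi, hi]
          rw [heq, Finset.card_insert_of_notMem]
          simp only [Finset.mem_filter, Finset.mem_univ, true_and]
          exact hnotin
        have hc : c' j = c j - 1 := by simp only [hc', Function.update_self]
        omega
      · have h1 : Finset.univ.filter (fun i => j ∈ A' i) =
            Finset.univ.filter (fun i => j ∈ A i) := by
          ext i
          simp only [Finset.mem_filter, Finset.mem_univ, true_and]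
          exact hAmem i j hj
        have h2 : c' j = c j := by rw [hc', Function.update_of_ne hj]
        rw [h1, h2] at this
        exact this
    · intro i j hj
      rcases hB4 i j hj with h | h
      · by_cases hi : i = i0
        · subst hi
          rw [hA', Function.update_self, Finset.mem_insert] at h
          rcases h with h | h
          · subst h; exact Or.inr hforb
          · exact Or.inl h
        · rw [hA', Function.update_of_ne hi] at h
          exact Or.inl h
      · exact Or.inr h

theorem stmt5 (n m K : ℕ) (l : Fin n → ℕ) (U : Fin m → ℕ)
    (forbid : Fin n → Fin m → Bool)
    (L : ℕ) (hL : L = ∑ i, l i)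
    (hK : ∀ j, (Finset.univ.filter (fun i => forbid i j = true)).card ≤ K)
    (hneigh : ∀ i, L ≤ (Finset.univ.filter (fun j => forbid i j = false)).card)
    (hcap : L ≤ ∑ j, U j)
    (hU1 : ∀ j, 1 ≤ U j) :
    ∃ X : Fin n → Fin m → ℕ,
      (∀ i j, X i j = 0 ∨ X i j = 1) ∧
      (∀ i, l i ≤ ∑ j, X i j) ∧
      (∀ j, ∑ i, X i j ≤ U j) ∧
      (∀ i j, forbid i j = true → X i j = 0) := by
  have hcount : ∀ i, L ≤ (Finset.univ.filter
      (fun j => forbid i j = false ∧ 0 < U j ∧ j ∉ (∅ : Finset (Fin m)))).card := by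
    intro i
    have heq : Finset.univ.filter
        (fun j => forbid i j = false ∧ 0 < U j ∧ j ∉ (∅ : Finset (Fin m))) =
        Finset.univ.filter (fun j => forbid i j = false) := by
      ext j
      simp only [Finset.mem_filter, Finset.mem_univ, true_and, Finset.notMem_empty,
        not_false_iff, and_true]
      exact ⟨fun h => h.1, fun h => ⟨h, hU1 j⟩⟩
    rw [heq]
    exact hneigh i
  obtain ⟨B, hB1, hB2, hB3, hB4⟩ := greedy_aux n m forbid L l U (fun _ => ∅) hL hcount
  refine ⟨fun i j => if j ∈ B i then 1 else 0, ?_, ?_, ?_, ?_⟩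
  · intro i j
    by_cases h : j ∈ B i <;> simp [h]
  · intro i
    have : ∑ j, (if j ∈ B i then 1 else 0) = (B i).card := by
      rw [Finset.card_eq_sum_ones]
      rw [Finset.sum_ite_mem]
      simp
    rw [this]
    have := hB2 i
    simpa using this
  · intro j
    have : ∑ i, (if j ∈ B i then 1 else 0) =
        (Finset.univ.filter (fun i => j ∈ B i)).card := by
      rw [Finset.card_filter]
    rw [this]
    have := hB3 j
    simpa using this
  · intro i j hf
    have : j ∉ B i := by
      intro hmem
      rcases hB4 i j hmem with h | h
      · simp at h
      · rw [hf] at h; exact Bool.noConfusion h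
    simp [this]
end

section
/- Let A be a finite nonempty set, W : A → ℤ integer-valued, C : A → ℝ bounded with ΔC = max_A C − min_A C > 0, and 0 < λ < 1/ΔC. Then x ∈ A maximizes W(x) − λ C(x) if and only if x maximizes W over A and minimizes C over the set argmax_A W. -/
theorem stmt8 {α : Type*} (A : Finset α) (hA : A.Nonempty) (W : α → ℤ) (C : α → ℝ)
    (hC : ∃ M, ∀ x, |C x| ≤ M)
    (hΔ : 0 < A.sup' hA C - A.inf' hA C) :
    ∀ lam : ℝ, 0 < lam → lam < 1 / (A.sup' hA C - A.inf' hA C) →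
      ∀ x ∈ A,
        ((∀ y ∈ A, (W y : ℝ) - lam * C y ≤ (W x : ℝ) - lam * C x) ↔
          ((∀ y ∈ A, W y ≤ W x) ∧
            (∀ y ∈ A, (∀ z ∈ A, W z ≤ W y) → C x ≤ C y))) := by
  intro lam hlam hlam' x hx
  set S := A.sup' hA C with hS
  set I := A.inf' hA C with hI
  have hbound : ∀ a ∈ A, ∀ b ∈ A, C a - C b ≤ S - I := by
    intro a ha b hb
    have h1 : C a ≤ S := Finset.le_sup' C ha
    have h2 : I ≤ C b := Finset.inf'_le C hb
    linarith
  have hlamΔ : lam * (S - I) < 1 := by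
    rw [lt_div_iff₀ hΔ] at hlam'
    linarith
  constructor
  · intro h
    have hWmax : ∀ y ∈ A, W y ≤ W x := by
      intro y hy
      have hf := h y hy
      have hb := hbound y hy x hx
      have : ((W y - W x : ℤ) : ℝ) < 1 := by push_cast; nlinarith
      have : (W y - W x : ℤ) < 1 := by exact_mod_cast this
      omega
    refine ⟨hWmax, ?_⟩
    intro y hy hymax
    have hWy : W y = W x := le_antisymm (hWmax y hy) (hymax x hx)
    have hf := h y hy
    have hWr : (W y : ℝ) = W x := by exact_mod_cast hWy
    nlinarith
  · rintro ⟨hWmax, hCmin⟩ y hy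
    by_cases hcase : W y = W x
    · have hymax : ∀ z ∈ A, W z ≤ W y := fun z hz => hcase ▸ hWmax z hz
      have hCx := hCmin y hy hymax
      have hWr : (W y : ℝ) = W x := by exact_mod_cast hcase
      nlinarith
    · have hle : W y ≤ W x - 1 := by have := hWmax y hy; omega
      have h1 : (W y : ℝ) ≤ (W x : ℝ) - 1 := by exact_mod_cast hle
      have h2 := hbound x hx y hy
      nlinarith
end

section
/- Let n = 3, m = 2, with each paper requiring exactly one review, each reviewer able to review at most U_j = 2 papers, and effort matrix W_R given by (W_R)_{1,·} = (11, 10, 1) and (W_R)_{2,·} = (3, 2, 1) (so both reviewers prefer paper 3 over paper 2 over paper 1). If both degrees of freedom φ_1, φ_2 are positive (so each reviewer's proposal contains U_j + φ_j = 3 papers, i.e., all papers, and each bids for exactly 2 least-effort papers), then no feasible final assignment exists: paper 1 (the highest-effort paper for both reviewers) is refused by both reviewers, so no assignment X with X ≤ Y covering all three papers exists. -/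
theorem stmt11 (W : Fin 3 → Fin 2 → ℝ)
    (hW : W = !![(11 : ℝ), 3; 10, 2; 1, 1]) :
    ∀ Y : Fin 3 → Fin 2 → ℝ,
      (∀ i j, Y i j = 0 ∨ Y i j = 1) →
      (∀ j, ∑ i, Y i j = 2) →
      (∀ j, ∀ y : Fin 3 → ℝ, (∀ i, y i = 0 ∨ y i = 1) → (∑ i, y i = 2) →
        ∑ i, W i j * Y i j ≤ ∑ i, W i j * y i) →
      ¬ ∃ X : Fin 3 → Fin 2 → ℝ,
        (∀ i j, X i j = 0 ∨ X i j = 1) ∧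
        (∀ i j, X i j ≤ Y i j) ∧
        (∀ i, ∑ j, X i j = 1) ∧
        (∀ j, ∑ i, X i j ≤ 2) := by
  intro Y hY01 hYsum hYopt
  rintro ⟨X, hX01, hXY, hXrow, hXcol⟩
  have hY0 : ∀ j, Y 0 j = 0 := by
    intro j
    rcases hY01 0 j with h0 | h0
    · exact h0
    exfalso
    have hopt := hYopt j (fun i => if i = 0 then 0 else 1)
      (by intro i; by_cases h : i = 0 <;> simp [h])
      (by norm_num [Fin.sum_univ_three, show (1:Fin 3) ≠ 0 by decide, show (2:Fin 3) ≠ 0 by decide])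
    have hs := hYsum j
    rcases hY01 1 j with h1 | h1 <;> rcases hY01 2 j with h2 | h2 <;>
      fin_cases j <;>
      simp_all [Fin.sum_univ_three, hW]
    all_goals linarith
  have h00 : X 0 0 ≤ 0 := (hXY 0 0).trans_eq (hY0 0)
  have h01 : X 0 1 ≤ 0 := (hXY 0 1).trans_eq (hY0 1)
  have hr := hXrow 0
  rw [Fin.sum_univ_two] at hr
  rcases hX01 0 0 with a | a <;> rcases hX01 0 1 with b | b <;> rw [a, b] at hr <;>
    first
      | linarith [h00, h01]
      | norm_num at hr
end

section
/- Let n, m ∈ ℕ, l_i ≤ u_i for all i ∈ [n], ∑_i l_i ≤ ∑_j U_j, and suppose the classic ILP assignment problem (maximize ⟨W_E, X⟩ over binary X with l_i ≤ ∑_j X_{i,j} ≤ u_i and ∑_i X_{i,j} ≤ U_j) is feasible. If max_j φ_j + 2 max_j U_j ≤ n, then there exist binary matrices Z, Y, X such that: ∑_i Z_{i,j} = U_j + φ_j for all j; Y ≤ Z with ∑_i Y_{i,j} = U_j and each column of Y minimizing reviewer j's effort among such columns; X satisfies the ILP constraints and X ≤ E − Z + Y (entrywise, E the all-ones matrix).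 -/
/-! Start from any feasible assignment `X`. Column `j` of `X` uses at most `U j` papers, so
at least `n - U j ≥ U j + φ j` papers are not assigned to reviewer `j`; the editor proposes
`U j + φ j` of those, and the reviewer bids on a cheapest `U j` of the proposal. The papers
reviewer `j` refuses lie inside the proposal, hence outside the support of column `j` of `X`,
so `X` itself remains a valid final assignment. -/

open Finset

section BinaryVectors

variable {ι : Type*}

theorem eq_indicator_of_binary [Fintype ι] {y : ι → ℝ} (hy : ∀ i, y i = 0 ∨ y i = 1) :
    y = ((univ.filter (y · = 1) : Finset ι) : Set ι).indicator 1 := by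
  funext i
  rcases hy i with h | h <;> simp [h]

variable [DecidableEq ι]

theorem sum_indicator_one_eq_card [Fintype ι] (s : Finset ι) :
    ∑ i, (s : Set ι).indicator (1 : ι → ℝ) i = #s := by
  simp [Set.indicator_apply]

theorem sum_mul_indicator_one [Fintype ι] (w : ι → ℝ) (s : Finset ι) :
    ∑ i, w i * (s : Set ι).indicator 1 i = ∑ i ∈ s, w i := by
  simp [Set.indicator_apply]

theorem subset_of_indicator_one_le {s t : Finset ι}
    (h : ∀ i, (s : Set ι).indicator (1 : ι → ℝ) i ≤ (t : Set ι).indicator 1 i) :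
    s ⊆ t := by
  intro i hi
  by_contra hit
  have := h i
  norm_num [hi, hit] at this

theorem indicator_one_le_one_sub_add {S Z Y : Finset ι} (hZS : Disjoint Z S) (hYZ : Y ⊆ Z)
    (i : ι) :
    (S : Set ι).indicator (1 : ι → ℝ) i ≤
      1 - (Z : Set ι).indicator 1 i + (Y : Set ι).indicator 1 i := by
  by_cases hS : i ∈ S
  · have hZ : i ∉ Z := disjoint_right.mp hZS hS
    have hY : i ∉ Y := fun h => hZ (hYZ h)
    simp [hS, hZ, hY]
  · by_cases hY : i ∈ Y <;> by_cases hZ : i ∈ Z <;> simp [hS, hY, hZ]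

end BinaryVectors

theorem Finset.exists_disjoint_card_eq {ι : Type*} [Fintype ι] [DecidableEq ι]
    {S : Finset ι} {k : ℕ} (h : k + #S ≤ Fintype.card ι) :
    ∃ Z, Disjoint Z S ∧ #Z = k := by
  obtain ⟨Z, hZ, hcard⟩ :=
    exists_subset_card_eq (s := Sᶜ) (n := k) (by rw [card_compl]; omega)
  exact ⟨Z, subset_compl_iff_disjoint_right.mp hZ, hcard⟩

theorem Finset.exists_subset_card_eq_forall_sum_le {ι : Type*} (w : ι → ℝ) {Z : Finset ι}
    {k : ℕ} (hk : k ≤ #Z) :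
    ∃ Y ⊆ Z, #Y = k ∧ ∀ T ⊆ Z, #T = k → ∑ i ∈ Y, w i ≤ ∑ i ∈ T, w i := by
  obtain ⟨Y, hY, hmin⟩ := exists_min_image (Z.powersetCard k) (fun T => ∑ i ∈ T, w i)
    (powersetCard_nonempty.mpr hk)
  rw [mem_powersetCard] at hY
  exact ⟨Y, hY.1, hY.2, fun T hTZ hT => hmin T (mem_powersetCard.mpr ⟨hTZ, hT⟩)⟩

theorem stmt12_general (n m : ℕ) (l u : Fin n → ℕ) (U phi : Fin m → ℕ)
    (WR : Fin n → Fin m → ℝ)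
    (hfeas : ∃ X : Fin n → Fin m → ℝ, (∀ i j, X i j = 0 ∨ X i j = 1) ∧
      (∀ i, (l i : ℝ) ≤ ∑ j, X i j ∧ ∑ j, X i j ≤ (u i : ℝ)) ∧
      (∀ j, ∑ i, X i j ≤ (U j : ℝ)))
    (hcond : Finset.univ.sup phi + 2 * Finset.univ.sup U ≤ n) :
    ∃ Z Y X : Fin n → Fin m → ℝ,
      (∀ i j, Z i j = 0 ∨ Z i j = 1) ∧
      (∀ i j, Y i j = 0 ∨ Y i j = 1) ∧
      (∀ i j, X i j = 0 ∨ X i j = 1) ∧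
      (∀ j, ∑ i, Z i j = (U j : ℝ) + (phi j : ℝ)) ∧
      (∀ i j, Y i j ≤ Z i j) ∧
      (∀ j, ∑ i, Y i j = (U j : ℝ)) ∧
      (∀ j, ∀ y : Fin n → ℝ, (∀ i, y i = 0 ∨ y i = 1) → (∀ i, y i ≤ Z i j) →
        (∑ i, y i = (U j : ℝ)) →
        ∑ i, WR i j * Y i j ≤ ∑ i, WR i j * y i) ∧
      (∀ i, (l i : ℝ) ≤ ∑ j, X i j ∧ ∑ j, X i j ≤ (u i : ℝ)) ∧
      (∀ j, ∑ i, X i j ≤ (U j : ℝ)) ∧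
      (∀ i j, X i j ≤ 1 - Z i j + Y i j) := by
  obtain ⟨X, hXbin, hXrow, hXcol⟩ := hfeas
  set S : Fin m → Finset (Fin n) := fun j => univ.filter (X · j = 1)
  have hXS : ∀ i j, X i j = (S j : Set (Fin n)).indicator 1 i := fun i j =>
    congrFun (eq_indicator_of_binary fun i => hXbin i j) i
  have hroom : ∀ j, U j + phi j + #(S j) ≤ Fintype.card (Fin n) := by
    intro j
    have hS : #(S j) ≤ U j := by
      have := hXcol j
      simp only [hXS, sum_indicator_one_eq_card] at this
      exact_mod_cast this
    have := le_sup (f := U) (mem_univ j)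
    have := le_sup (f := phi) (mem_univ j)
    rw [Fintype.card_fin]
    omega
  choose Z hZS hZcard using fun j => exists_disjoint_card_eq (hroom j)
  choose Y hYZ hYcard hYmin using
    fun j => exists_subset_card_eq_forall_sum_le (WR · j) (hZcard j ▸ Nat.le_add_right _ _)
  refine ⟨fun i j => (Z j : Set (Fin n)).indicator 1 i,
    fun i j => (Y j : Set (Fin n)).indicator 1 i, X,
    fun i j => Set.indicator_eq_zero_or_self _ _ i, fun i j => Set.indicator_eq_zero_or_self _ _ i,
    hXbin, fun j => ?_, fun i j => ?_, fun j => ?_, fun j y hy hyZ hysum => ?_, hXrow, hXcol,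
    fun i j => hXS i j ▸ indicator_one_le_one_sub_add (hZS j) (hYZ j) i⟩
  · rw [sum_indicator_one_eq_card, hZcard, Nat.cast_add]
  · exact Set.indicator_le_indicator_of_subset (coe_subset.mpr (hYZ j)) (fun _ => zero_le_one) i
  · rw [sum_indicator_one_eq_card, hYcard]
  · rw [eq_indicator_of_binary hy] at hyZ hysum ⊢
    rw [sum_mul_indicator_one, sum_mul_indicator_one]
    refine hYmin j _ (subset_of_indicator_one_le hyZ) ?_
    exact_mod_cast (sum_indicator_one_eq_card _).symm.trans hysum

theorem stmt12 (n m : ℕ) (l u : Fin n → ℕ) (U phi : Fin m → ℕ)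
    (WE WR : Fin n → Fin m → ℝ)
    (hlu : ∀ i, l i ≤ u i)
    (hLU : ∑ i, l i ≤ ∑ j, U j)
    (hfeas : ∃ X : Fin n → Fin m → ℝ, (∀ i j, X i j = 0 ∨ X i j = 1) ∧
      (∀ i, (l i : ℝ) ≤ ∑ j, X i j ∧ ∑ j, X i j ≤ (u i : ℝ)) ∧
      (∀ j, ∑ i, X i j ≤ (U j : ℝ)))
    (hcond : Finset.univ.sup phi + 2 * Finset.univ.sup U ≤ n) :
    ∃ Z Y X : Fin n → Fin m → ℝ,
      (∀ i j, Z i j = 0 ∨ Z i j = 1) ∧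
      (∀ i j, Y i j = 0 ∨ Y i j = 1) ∧
      (∀ i j, X i j = 0 ∨ X i j = 1) ∧
      (∀ j, ∑ i, Z i j = (U j : ℝ) + (phi j : ℝ)) ∧
      (∀ i j, Y i j ≤ Z i j) ∧
      (∀ j, ∑ i, Y i j = (U j : ℝ)) ∧
      (∀ j, ∀ y : Fin n → ℝ, (∀ i, y i = 0 ∨ y i = 1) → (∀ i, y i ≤ Z i j) →
        (∑ i, y i = (U j : ℝ)) →
        ∑ i, WR i j * Y i j ≤ ∑ i, WR i j * y i) ∧
      (∀ i, (l i : ℝ) ≤ ∑ j, X i j ∧ ∑ j, X i j ≤ (u i : ℝ)) ∧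
      (∀ j, ∑ i, X i j ≤ (U j : ℝ)) ∧
      (∀ i j, X i j ≤ 1 - Z i j + Y i j) :=
  stmt12_general n m l u U phi WR hfeas hcond
end

section
/- Let A = {L1, L2, L3}, B partitioned into B_1 = {R1, R2} and B_2 = {R3}, and weights w with w_{1,1} = w_{1,2} = 0.1 and w_{1,3} = 0.9. Among selections of exactly two elements of B for item L1, the weighted diversity contribution ∑_k (∑_{j∈B_k} w_{1,j} x_{1,j})^2 is minimized by choosing {R1, R2} (both in the same block), since (0.1+0.1)^2 = 0.04 < 0.1^2 + 0.9^2 = 0.82 and (0.1+0.1)^2 < 0.1^2 + 0.9^2; in particular the minimizer concentrates the assignment in a single block. -/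
lemma eq_of_forall_eq_zero_or_one_of_sum_eq_two {R : Type*} [Ring R] [CharZero R]
    {x : Fin 3 → R} (hx : ∀ i, x i = 0 ∨ x i = 1) (hsum : ∑ i, x i = 2) :
    x = ![1, 1, 0] ∨ x = ![1, 0, 1] ∨ x = ![0, 1, 1] := by
  rw [Fin.sum_univ_three] at hsum
  have hx_eq : x = ![x 0, x 1, x 2] := by ext i; fin_cases i <;> rfl
  rw [hx_eq]
  rcases hx 0 with h0 | h0 <;> rcases hx 1 with h1 | h1 <;> rcases hx 2 with h2 | h2 <;>
    rw [h0, h1, h2] at hsum ⊢ <;> norm_num at hsum <;> simp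

theorem stmt18 (w : Fin 3 → ℝ) (hw : w = ![0.1, 0.1, 0.9])
    (v : (Fin 3 → ℝ) → ℝ)
    (hv : v = fun x => (w 0 * x 0 + w 1 * x 1) ^ 2 + (w 2 * x 2) ^ 2) :
    ((0.1 + 0.1 : ℝ) ^ 2 < (0.1 : ℝ) ^ 2 + (0.9 : ℝ) ^ 2) ∧
    v ![1, 1, 0] < v ![1, 0, 1] ∧
    v ![1, 1, 0] < v ![0, 1, 1] ∧
    (∀ x : Fin 3 → ℝ, (∀ i, x i = 0 ∨ x i = 1) → (∑ i, x i = 2) →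
      v ![1, 1, 0] ≤ v x) := by
  have hv_apply (x : Fin 3 → ℝ) : v x = (0.1 * x 0 + 0.1 * x 1) ^ 2 + (0.9 * x 2) ^ 2 := by
    subst hw hv; rfl
  have same_block : v ![1, 1, 0] = (0.1 + 0.1 : ℝ) ^ 2 := by
    norm_num [hv_apply, Matrix.cons_val_two]
  have split_left : v ![1, 0, 1] = (0.1 : ℝ) ^ 2 + 0.9 ^ 2 := by
    norm_num [hv_apply, Matrix.cons_val_two]
  have split_right : v ![0, 1, 1] = (0.1 : ℝ) ^ 2 + 0.9 ^ 2 := by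
    norm_num [hv_apply, Matrix.cons_val_two]
  have gap : (0.1 + 0.1 : ℝ) ^ 2 < 0.1 ^ 2 + 0.9 ^ 2 := by norm_num
  refine ⟨gap, by rwa [same_block, split_left], by rwa [same_block, split_right], ?_⟩
  intro x hx hsum
  rcases eq_of_forall_eq_zero_or_one_of_sum_eq_two hx hsum with rfl | rfl | rfl
  · exact le_rfl
  · rw [same_block, split_left]; exact gap.le
  · rw [same_block, split_right]; exact gap.le
end
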